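/- The theoretical extended variance V(x) := (1/2) Σ_{i,j∈I} Λ(i-j) ∫_{C_i(x)} ‖x_j - ω‖² dP(ω) is continuous on D_I^δ, provided P has a density bounded by B with respect to Lebesgue measure on [0,1]^d. -/

import Mathlib

open MeasureTheory Finset

noncomputable section

abbrev Eu (d : ℕ) := EuclideanSpace ℝ (Fin d)

def cube (d : ℕ) : Set (Eu d) := {ω | ∀ i, ω i ∈ Set.Icc (0:ℝ) 1}

def vIndex {d : ℕ} {ι : Type*} [Fintype ι] [LinearOrder ι] [Nonempty ι]
    (x : ι → Eu d) (ω : Eu d) : ι :=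
  (Finset.univ.filter fun i => ∀ j, dist (x i) ω ≤ dist (x j) ω).min' (by
    obtain ⟨i, -, hi⟩ := Finset.exists_min_image Finset.univ
      (fun j => dist (x j) ω) ⟨Classical.arbitrary ι, Finset.mem_univ _⟩
    exact ⟨i, Finset.mem_filter.2 ⟨Finset.mem_univ _,
      fun j => hi j (Finset.mem_univ _)⟩⟩)

def vCell {d : ℕ} {ι : Type*} [Fintype ι] [LinearOrder ι] [Nonempty ι]
    (x : ι → Eu d) (i : ι) : Set (Eu d) :=
  {ω ∈ cube d | vIndex x ω = i}

def sep {d : ℕ} {ι : Type*} (δ : ℝ) : Set (ι → Eu d) :=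
  {x | (∀ i, x i ∈ cube d) ∧ ∀ i j, i ≠ j → δ ≤ dist (x i) (x j)}

def gfun {d : ℕ} {ι : Type*} [Fintype ι] [LinearOrder ι] [Nonempty ι]
    (Λ : ι → ι → ℝ) (x : ι → Eu d) (ω : Eu d) : ℝ :=
  ∑ j, Λ (vIndex x ω) j * ‖x j - ω‖ ^ 2

def extVar {d : ℕ} {ι : Type*} [Fintype ι] [LinearOrder ι] [Nonempty ι]
    (Λ : ι → ι → ℝ) (P : Measure (Eu d)) (x : ι → Eu d) : ℝ :=
  (1/2) * ∑ i, ∑ j, Λ i j * ∫ ω in vCell x i, ‖x j - ω‖ ^ 2 ∂P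

/-!
Off the perpendicular bisectors of the centroids `x₀`, the nearest centroid to `ω` is strict, so
it stays the nearest one for every `x` near `x₀`; hence each integrand
`x ↦ 𝟙[vCell x i](ω) ‖x j - ω‖²` is continuous at `x₀` for such `ω`. When the centroids are
distinct the bisectors are proper hyperplanes, Lebesgue-null and therefore `P`-null since `P` has
a bounded density. The integrands are bounded uniformly near `x₀` because the cells lie in the
unit cube, so dominated convergence gives continuity of every term of `extVar`.
-/

open Topology Filter Function

lemma measure_setOf_dist_eq_dist {E : Type*} [NormedAddCommGroup E] [InnerProductSpace ℝ E]
    [FiniteDimensional ℝ E] [MeasurableSpace E] [BorelSpace E] (μ : Measure E)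
    [μ.IsAddHaarMeasure] {a b : E} (hab : a ≠ b) : μ {ω | dist a ω = dist b ω} = 0 := by
  convert Measure.addHaar_affineSubspace μ (AffineSubspace.perpBisector a b) (by simpa using hab)
  ext
  simp [AffineSubspace.mem_perpBisector_iff_dist_eq']

lemma ae_pairwise_dist_ne {E : Type*} [NormedAddCommGroup E] [InnerProductSpace ℝ E]
    [FiniteDimensional ℝ E] [MeasurableSpace E] [BorelSpace E] (μ : Measure E)
    [μ.IsAddHaarMeasure] {κ : Type*} [Countable κ] {x : κ → E} (hx : Injective x) :
    ∀ᵐ ω ∂μ, Pairwise fun i j => dist (x i) ω ≠ dist (x j) ω := by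
  refine ae_all_iff.2 fun i => ae_all_iff.2 fun j => ?_
  by_cases hij : i = j
  · exact .of_forall fun _ h => absurd hij h
  · simpa [ae_iff, hij] using measure_setOf_dist_eq_dist μ (hx.ne hij)

lemma isClosed_cube (d : ℕ) : IsClosed (cube d) := by
  simp only [cube, Set.ofPred_forall]
  exact isClosed_iInter fun i => isClosed_Icc.preimage (by fun_prop)

lemma norm_le_sqrt_of_mem_cube {d : ℕ} {ω : Eu d} (hω : ω ∈ cube d) : ‖ω‖ ≤ √d := by
  rw [EuclideanSpace.norm_eq]
  gcongr
  calc ∑ i, ‖ω i‖ ^ 2 ≤ ∑ _i : Fin d, (1 : ℝ) :=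
        Finset.sum_le_sum fun i _ => by
          rw [Real.norm_eq_abs, sq_abs]; exact pow_le_one₀ (hω i).1 (hω i).2
    _ = d := by simp

lemma injective_of_mem_sep {d : ℕ} {ι : Type*} {δ : ℝ} (hδ : 0 < δ) {x : ι → Eu d}
    (hx : x ∈ sep δ) : Injective x := by
  intro i j hij
  by_contra hne
  have := hx.2 i j hne
  rw [hij, dist_self] at this
  linarith

section Voronoi

variable {d : ℕ} {ι : Type*} [Fintype ι] [LinearOrder ι] [Nonempty ι]

lemma vIndex_eq_iff (x : ι → Eu d) (ω : Eu d) (i : ι) :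
    vIndex x ω = i ↔ (∀ k, dist (x i) ω ≤ dist (x k) ω) ∧
      ∀ j, (∀ k, dist (x j) ω ≤ dist (x k) ω) → i ≤ j := by
  simp [vIndex, Finset.min'_eq_iff]

lemma dist_vIndex_le (x : ι → Eu d) (ω : Eu d) (k : ι) :
    dist (x (vIndex x ω)) ω ≤ dist (x k) ω :=
  ((vIndex_eq_iff x ω _).1 rfl).1 k

lemma vIndex_eq_of_forall_dist_lt {x : ι → Eu d} {ω : Eu d} {i : ι}
    (h : ∀ k ≠ i, dist (x i) ω < dist (x k) ω) : vIndex x ω = i := by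
  by_contra hne
  exact (h _ hne).not_ge (dist_vIndex_le x ω i)

lemma measurableSet_vIndex_eq (x : ι → Eu d) (i : ι) :
    MeasurableSet {ω | vIndex x ω = i} := by
  simp only [vIndex_eq_iff]
  exact Measurable.setOf (by fun_prop)

lemma measurableSet_vCell (x : ι → Eu d) (i : ι) : MeasurableSet (vCell x i) :=
  (isClosed_cube d).measurableSet.inter (measurableSet_vIndex_eq x i)

lemma eventually_vIndex_eq {x₀ : ι → Eu d} {ω : Eu d}
    (hω : Pairwise fun i j => dist (x₀ i) ω ≠ dist (x₀ j) ω) :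
    ∀ᶠ x in 𝓝 x₀, vIndex x ω = vIndex x₀ ω := by
  set i₀ := vIndex x₀ ω
  have hlt : ∀ k, ∀ᶠ x in 𝓝 x₀, k ≠ i₀ → dist (x i₀) ω < dist (x k) ω := fun k => by
    by_cases hk : k = i₀
    · exact .of_forall fun _ h => absurd hk h
    · have hlt₀ : dist (x₀ i₀) ω < dist (x₀ k) ω :=
        (dist_vIndex_le x₀ ω k).lt_of_ne (hω hk).symm
      exact (ContinuousAt.eventually_lt ((continuous_apply i₀).dist continuous_const).continuousAt
        ((continuous_apply k).dist continuous_const).continuousAt hlt₀).mono fun _ h _ => h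
  filter_upwards [eventually_all.2 hlt] with x hx
  exact vIndex_eq_of_forall_dist_lt hx

lemma continuousAt_indicator_vCell {x₀ : ι → Eu d} {ω : Eu d}
    (hω : Pairwise fun i j => dist (x₀ i) ω ≠ dist (x₀ j) ω) (i j : ι) :
    ContinuousAt (fun x : ι → Eu d => (vCell x i).indicator (fun ω => ‖x j - ω‖ ^ 2) ω) x₀ := by
  have hmem : ∀ᶠ x in 𝓝 x₀, ω ∈ vCell x i ↔ ω ∈ vCell x₀ i := by
    filter_upwards [eventually_vIndex_eq hω] with x hx
    simp only [vCell, Set.mem_ofPred_eq, hx]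
  by_cases hω₀ : ω ∈ vCell x₀ i
  · have hf : Continuous fun x : ι → Eu d => ‖x j - ω‖ ^ 2 := by fun_prop
    refine hf.continuousAt.congr ?_
    filter_upwards [hmem] with x hx
    exact (Set.indicator_of_mem (hx.2 hω₀) fun ω => ‖x j - ω‖ ^ 2).symm
  · refine (continuousAt_const (y := (0 : ℝ))).congr ?_
    filter_upwards [hmem] with x hx
    exact (Set.indicator_of_notMem (mt hx.1 hω₀) fun ω => ‖x j - ω‖ ^ 2).symm

lemma continuousAt_setIntegral_vCell {P : Measure (Eu d)} [IsFiniteMeasure P] (hP : P ≪ volume)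
    {x₀ : ι → Eu d} (hx₀ : Injective x₀) (i j : ι) :
    ContinuousAt (fun x : ι → Eu d => ∫ ω in vCell x i, ‖x j - ω‖ ^ 2 ∂P) x₀ := by
  simp only [← integral_indicator (measurableSet_vCell _ i)]
  have hnear : ∀ᶠ x in 𝓝 x₀, ‖x j‖ < ‖x₀ j‖ + 1 :=
    (continuous_apply j).norm.continuousAt.eventually_lt continuousAt_const (lt_add_one _)
  refine continuousAt_of_dominated (bound := fun _ => (‖x₀ j‖ + 1 + √d) ^ 2)
    (.of_forall fun x => ?_) ?_ (integrable_const _) ?_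
  · exact (Continuous.aestronglyMeasurable (by fun_prop)).indicator (measurableSet_vCell x i)
  · filter_upwards [hnear] with x hx
    refine .of_forall fun ω => ?_
    by_cases hω : ω ∈ vCell x i
    · rw [Set.indicator_of_mem hω, norm_pow, norm_norm]
      gcongr
      calc ‖x j - ω‖ ≤ ‖x j‖ + ‖ω‖ := norm_sub_le _ _
        _ ≤ ‖x₀ j‖ + 1 + √d := add_le_add hx.le (norm_le_sqrt_of_mem_cube hω.1)
    · rw [Set.indicator_of_notMem hω, norm_zero]
      positivity
  · filter_upwards [hP.ae_le (ae_pairwise_dist_ne volume hx₀)] with ω hω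
    exact continuousAt_indicator_vCell hω i j

theorem continuousAt_extVar (Λ : ι → ι → ℝ) {P : Measure (Eu d)} [IsFiniteMeasure P]
    (hP : P ≪ volume) {x₀ : ι → Eu d} (hx₀ : Injective x₀) : ContinuousAt (extVar Λ P) x₀ := by
  have hterm := continuousAt_setIntegral_vCell hP hx₀
  unfold extVar
  fun_prop

end Voronoi

theorem stmt12_general {d : ℕ} {ι : Type*} [Fintype ι] [LinearOrder ι] [Nonempty ι]
    (Λ : ι → ι → ℝ)
    (δ B : ℝ) (hδ : 0 < δ)
    (P : Measure (Eu d)) [IsProbabilityMeasure P]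
    (hPB : ∀ s : Set (Eu d), MeasurableSet s →
      P s ≤ ENNReal.ofReal B * volume s) :
    ContinuousOn (extVar Λ P) (sep δ : Set (ι → Eu d)) := by
  have hP : P ≪ volume := Measure.absolutelyContinuous_of_le_smul (Measure.le_iff.2 hPB)
  exact fun x hx => (continuousAt_extVar Λ hP (injective_of_mem_sep hδ hx)).continuousWithinAt

theorem stmt12 {d : ℕ} {ι : Type*} [Fintype ι] [LinearOrder ι] [Nonempty ι]
    (Λ : ι → ι → ℝ) (hΛmem : ∀ i j, Λ i j ∈ Set.Icc (0:ℝ) 1)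
    (hΛsymm : ∀ i j, Λ i j = Λ j i) (hΛ0 : ∀ i, Λ i i = 1)
    (δ B : ℝ) (hδ : 0 < δ) (hB : 0 < B)
    (P : Measure (Eu d)) [IsProbabilityMeasure P] (hPcube : P (cube d) = 1)
    (hPB : ∀ s : Set (Eu d), MeasurableSet s →
      P s ≤ ENNReal.ofReal B * volume s) :
    ContinuousOn (extVar Λ P) (sep δ : Set (ι → Eu d)) :=
  stmt12_general Λ δ B hδ P hPB
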